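/- arXiv:0712.4341 — 7 statements merged into one kernel-verified Lean document; each statement's English description precedes it below -/
import Mathlib

section
/- For every l-valued finite automaton A = (Q, Σ, δ, I, F), the image set of its recognized l-valued language, Im(rec_A) = { r ∈ l : ∃ ω ∈ Σ*, rec_A(ω) = r }, is a finite subset of l. -/
/-- A complete orthomodular lattice. -/
class OrthomodularCompleteLattice (α : Type*) extends CompleteLattice α, Compl α where
  inf_compl_self : ∀ a : α, a ⊓ aᶜ = ⊥
  sup_compl_self : ∀ a : α, a ⊔ aᶜ = ⊤
  compl_compl' : ∀ a : α, aᶜᶜ = a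
  compl_antitone : ∀ a b : α, a ≤ b → bᶜ ≤ aᶜ
  orthomodular : ∀ a b : α, a ≤ b → b = a ⊔ (aᶜ ⊓ b)

/-- An `l`-valued finite automaton (`l`-VFA). -/
structure LVFA (Q A l : Type*) where
  δ : Q → A → Q → l
  init : Q → l
  final : Q → l

/-- The `l`-valued language recognized by an `l`-VFA. -/
def lvfaLang {Q A l : Type*} [OrthomodularCompleteLattice l] (M : LVFA Q A l)
    (w : List A) : l :=
  ⨆ path : Fin (w.length + 1) → Q,
    M.init (path 0) ⊓
      (⨅ i : Fin w.length, M.δ (path i.castSucc) (w.get i) (path i.succ)) ⊓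
      M.final (path (Fin.last w.length))

/-- An `l`-valued deterministic finite automaton (`l`-VDFA). -/
structure LVDFA (Q A l : Type*) where
  next : Q → A → Q
  start : Q
  final : Q → l

/-- The `l`-valued language recognized by an `l`-VDFA. -/
def lvdfaLang {Q A l : Type*} (M : LVDFA Q A l) (w : List A) : l :=
  M.final (w.foldl M.next M.start)

/-- An `l`-valued finite automaton with ε-moves (`ε` is encoded as `none`). -/
structure LVFAe (Q A l : Type*) where
  δ : Q → Option A → Q → l
  init : Q → l
  final : Q → l

/-- The `l`-valued language recognized by an `l`-VFA with ε-moves. -/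
def lvfaeLang {Q A l : Type*} [OrthomodularCompleteLattice l] (M : LVFAe Q A l)
    (w : List A) : l :=
  ⨆ n : ℕ, ⨆ τ : Fin n → Option A, ⨆ _ : (List.ofFn τ).reduceOption = w,
    ⨆ path : Fin (n + 1) → Q,
      M.init (path 0) ⊓
        (⨅ i : Fin n, M.δ (path i.castSucc) (τ i) (path i.succ)) ⊓
        M.final (path (Fin.last n))

/-- An `l`-valued language is `l`-regular if it is recognized by some `l`-VFA. -/
def IsLRegular {A l : Type*} [OrthomodularCompleteLattice l] (f : List A → l) : Prop :=
  ∃ (Q : Type) (_ : Fintype Q) (M : LVFA Q A l), ∀ w, lvfaLang M w = f w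

/-! Every accepting path of `M` contributes the meet of finitely many values drawn from the finite
set `M.weights`, so each `lvfaLang M w` is a join of meets of subsets of that set, and a finite
set has only finitely many such joins. -/

open Set

section CompleteLattice

variable {α : Type*} [CompleteLattice α] {ι : Sort*}

theorem iSup_mem_image_sSup_powerset {f : ι → α} {T : Set α} (hf : ∀ i, f i ∈ T) :
    ⨆ i, f i ∈ sSup '' 𝒫 T :=
  ⟨range f, range_subset_iff.2 hf, sSup_range⟩

theorem inf_iInf_inf_mem_image_sInf_powerset {a c : α} {f : ι → α} {S : Set α} (ha : a ∈ S)
    (hf : ∀ i, f i ∈ S) (hc : c ∈ S) : a ⊓ (⨅ i, f i) ⊓ c ∈ sInf '' 𝒫 S :=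
  ⟨{a} ∪ range f ∪ {c},
    union_subset (union_subset (singleton_subset_iff.2 ha) (range_subset_iff.2 hf))
      (singleton_subset_iff.2 hc),
    by simp only [sInf_union, sInf_singleton, sInf_range]⟩

theorem Set.Finite.image_sSup_powerset_image_sInf_powerset {S : Set α} (hS : S.Finite) :
    (sSup '' 𝒫 (sInf '' 𝒫 S)).Finite :=
  (hS.finite_subsets.image sInf).finite_subsets.image sSup

end CompleteLattice

namespace LVFA

variable {Q A l : Type*}

def weights (M : LVFA Q A l) : Set l :=
  range M.init ∪ range (fun p : Q × A × Q => M.δ p.1 p.2.1 p.2.2) ∪ range M.final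

theorem finite_weights [Finite Q] [Finite A] (M : LVFA Q A l) : M.weights.Finite :=
  ((finite_range _).union (finite_range _)).union (finite_range _)

theorem lvfaLang_mem_image_sSup_powerset_image_sInf_powerset [OrthomodularCompleteLattice l]
    (M : LVFA Q A l) (w : List A) : lvfaLang M w ∈ sSup '' 𝒫 (sInf '' 𝒫 M.weights) :=
  iSup_mem_image_sSup_powerset fun path =>
    inf_iInf_inf_mem_image_sInf_powerset (.inl (.inl ⟨path 0, rfl⟩))
      (fun i => .inl (.inr ⟨(path i.castSucc, w.get i, path i.succ), rfl⟩))
      (.inr ⟨path (Fin.last w.length), rfl⟩)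

end LVFA

/-- The image set of the language recognized by an `l`-VFA is finite. -/
theorem finite_image_of_lvfaLang {l Q A : Type*} [OrthomodularCompleteLattice l]
    [Fintype Q] [Fintype A] (M : LVFA Q A l) :
    (Set.range (lvfaLang M)).Finite :=
  M.finite_weights.image_sSup_powerset_image_sInf_powerset.subset <|
    range_subset_iff.2 M.lvfaLang_mem_image_sSup_powerset_image_sInf_powerset
end

section
/- Let A = (Q, Σ, δ, q₀, F) be an l-valued finite automaton with ε-moves whose transition relation is crisp and has a unique (crisp) initial state q₀, i.e. δ is a function Q × (Σ ∪ {ε}) → 2^Q and rec_A(ω) = ⋁{ F(q) : q ∈ δ*(q₀, ω) } where δ* is the extension of δ via ε-closures. Then there exists an l-valued finite automaton B without ε-moves (with crisp transitions, the same state set, and unique initial state q₀) such that rec_A = rec_B. -/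
/-- The ε-closure of a state under a crisp transition function with ε-moves. -/
def epsClosure {Q A : Type*} (δ : Q → Option A → Set Q) (q : Q) : Set Q :=
  {p | Relation.ReflTransGen (fun x y => y ∈ δ x none) q p}

/-- The extension `δ*` of a crisp transition function with ε-moves, via ε-closures:
`δ*(q, ε) = EC(q)` and `δ*(q, ωσ) = EC(⋃_{p ∈ δ*(q,ω)} δ(p, σ))`. -/
def epsStar {Q A : Type*} (δ : Q → Option A → Set Q) (q : Q) (w : List A) : Set Q :=
  w.foldl (fun S a => ⋃ p ∈ ⋃ s ∈ S, δ s (some a), epsClosure δ p) (epsClosure δ q)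
section

variable {Q A l : Type*}

namespace NFA

theorem mem_evalFrom_iff_exists_fin_path {M : NFA A Q} {S : Set Q} {w : List A} {q : Q} :
    q ∈ M.evalFrom S w ↔ ∃ path : Fin (w.length + 1) → Q, path 0 ∈ S ∧
      (∀ i : Fin w.length, path i.succ ∈ M.step (path i.castSucc) (w.get i)) ∧
      path (Fin.last w.length) = q := by
  induction w generalizing S with
  | nil =>
    refine ⟨fun hq => ⟨fun _ => q, hq, fun i => i.elim0, rfl⟩, ?_⟩
    rintro ⟨path, h0, -, rfl⟩
    exact h0
  | cons a w ih =>
    simp only [evalFrom_cons, ih, mem_stepSet]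
    constructor
    · rintro ⟨path, ⟨t, ht, h0⟩, hstep, rfl⟩
      refine ⟨Fin.cons t path, ht, Fin.cases (by simpa using h0) fun i => ?_, rfl⟩
      simpa using hstep i
    · rintro ⟨path, h0, hstep, rfl⟩
      exact ⟨Fin.tail path, ⟨path 0, h0, hstep 0⟩, fun i => hstep i.succ, rfl⟩

open Classical in
/-- `M.accept` is ignored: acceptance is given by the weights `final`. -/
noncomputable def toLVFA [Top l] [Bot l] (M : NFA A Q) (final : Q → l) : LVFA Q A l where
  δ p a q := if q ∈ M.step p a then ⊤ else ⊥
  init q := if q ∈ M.start then ⊤ else ⊥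
  final := final

theorem lvfaLang_toLVFA [OrthomodularCompleteLattice l] (M : NFA A Q) (final : Q → l)
    (w : List A) : lvfaLang (M.toLVFA final) w = ⨆ q ∈ M.eval w, final q := by
  apply le_antisymm
  · refine iSup_le fun path => ?_
    by_cases hrun : path 0 ∈ M.start ∧
        ∀ i : Fin w.length, path i.succ ∈ M.step (path i.castSucc) (w.get i)
    · exact inf_le_right.trans
        (le_biSup final (mem_evalFrom_iff_exists_fin_path.2 ⟨path, hrun.1, hrun.2, rfl⟩))
    · rw [not_and_or, not_forall] at hrun
      rcases hrun with h0 | ⟨i, hi⟩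
      · exact inf_le_left.trans <| inf_le_left.trans <| (if_neg h0).trans_le bot_le
      · exact inf_le_left.trans <| inf_le_right.trans <|
          (iInf_le _ i).trans <| (if_neg hi).trans_le bot_le
  · refine iSup₂_le fun q hq => ?_
    obtain ⟨path, h0, hstep, rfl⟩ := mem_evalFrom_iff_exists_fin_path.1 hq
    refine le_trans ?_ (le_iSup _ path)
    simp only [toLVFA, h0, hstep, if_true, iInf_top, top_inf_eq, le_refl]

end NFA

def epsRemoval (δ : Q → Option A → Set Q) (q₀ : Q) : NFA A Q where
  step p a := ⋃ s ∈ epsClosure δ p, δ s (some a)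
  start := {q₀}
  accept := ∅

theorem epsStar_eq_biUnion_eval (δ : Q → Option A → Set Q) (q₀ : Q) (w : List A) :
    epsStar δ q₀ w = ⋃ p ∈ (epsRemoval δ q₀).eval w, epsClosure δ p := by
  have hstart : epsClosure δ q₀ = ⋃ p ∈ ({q₀} : Set Q), epsClosure δ p := by simp
  rw [epsStar, hstart]
  refine List.foldl_hom (fun S => ⋃ p ∈ S, epsClosure δ p) fun S a => ?_
  ext q
  simp only [NFA.stepSet, epsRemoval, Set.mem_iUnion]
  tauto

end

theorem crisp_eps_removal_general {l Q A : Type*} [OrthomodularCompleteLattice l]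
    (δ : Q → Option A → Set Q) (q₀ : Q) (F : Q → l) :
    ∃ B : LVFA Q A l,
      (∀ p a q, B.δ p a q = ⊥ ∨ B.δ p a q = ⊤) ∧
      B.init q₀ = ⊤ ∧ (∀ q, q ≠ q₀ → B.init q = ⊥) ∧
      ∀ w : List A, lvfaLang B w = ⨆ q ∈ epsStar δ q₀ w, F q := by
  refine ⟨(epsRemoval δ q₀).toLVFA fun p => ⨆ q ∈ epsClosure δ p, F q, fun p a q => ?_,
    by simp [NFA.toLVFA, epsRemoval], fun q hq => by simp [NFA.toLVFA, epsRemoval, hq],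
    fun w => ?_⟩
  · simp only [NFA.toLVFA]
    split_ifs <;> simp
  · simp only [NFA.lvfaLang_toLVFA, epsStar_eq_biUnion_eval, iSup_iUnion]

/-- Every crisp `l`-valued automaton with ε-moves and unique initial state `q₀` is
equivalent to an `l`-VFA without ε-moves, with crisp transitions, the same state set,
and the same unique initial state. -/
theorem crisp_eps_removal {l Q A : Type*} [OrthomodularCompleteLattice l]
    [Fintype Q] [Fintype A] (δ : Q → Option A → Set Q) (q₀ : Q) (F : Q → l) :
    ∃ B : LVFA Q A l,
      (∀ p a q, B.δ p a q = ⊥ ∨ B.δ p a q = ⊤) ∧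
      B.init q₀ = ⊤ ∧ (∀ q, q ≠ q₀ → B.init q = ⊥) ∧
      ∀ w : List A, lvfaLang B w = ⨆ q ∈ epsStar δ q₀ w, F q :=
  crisp_eps_removal_general δ q₀ F
end

section
/- For every l-valued finite automaton with ε-moves A = (Q, Σ, δ, I, F) (with arbitrary l-valued transition relation δ : Q × (Σ ∪ {ε}) × Q → l and l-valued initial states I), there exists an l-valued finite automaton with ε-moves B whose transition relation is crisp (a function P × (Σ ∪ {ε}) → 2^P) and which has a unique initial state, such that rec_A = rec_B. -/
/-!
The automaton `B` first guesses, by an ε-move out of a fresh start state, an initial state `q₀`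
of `A` together with a set `S` of transitions of `A`; afterwards it follows `A` crisply, using
only transitions from `S`, and accepts in state `(q₀, S, q)` with value
`I(q₀) ∧ ⋀_{t ∈ S} δ(t) ∧ F(q)`. A run of `A` is simulated by guessing exactly its own set of
transitions, which gives the same value; conversely a run of `B` projects to a run of `A` whose
transitions all lie in `S`, whose value is therefore at least as large. Only the weights of
single runs are compared, so no distributivity of `l` is needed.
-/

namespace LVFAe

variable {Q P A l : Type*}

section Runs

variable [CompleteLattice l]

def runWeight (M : LVFAe Q A l) {n : ℕ} (τ : Fin n → Option A) (path : Fin (n + 1) → Q) : l :=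
  M.init (path 0) ⊓ (⨅ i, M.δ (path i.castSucc) (τ i) (path i.succ)) ⊓
    M.final (path (Fin.last n))

variable (M : LVFAe Q A l) {n : ℕ} (τ : Fin n → Option A) (path : Fin (n + 1) → Q)

theorem runWeight_le_init : M.runWeight τ path ≤ M.init (path 0) :=
  inf_le_left.trans inf_le_left

theorem runWeight_le_δ (i : Fin n) :
    M.runWeight τ path ≤ M.δ (path i.castSucc) (τ i) (path i.succ) :=
  inf_le_left.trans <| inf_le_right.trans <| iInf_le _ i

theorem runWeight_le_final : M.runWeight τ path ≤ M.final (path (Fin.last n)) :=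
  inf_le_right

def relabel (e : Q ≃ P) : LVFAe P A l where
  δ p σ p' := M.δ (e.symm p) σ (e.symm p')
  init p := M.init (e.symm p)
  final p := M.final (e.symm p)

theorem runWeight_relabel (e : Q ≃ P) (path : Fin (n + 1) → P) :
    (M.relabel e).runWeight τ path = M.runWeight τ (e.symm ∘ path) :=
  rfl

end Runs

section Lang

variable [OrthomodularCompleteLattice l]

theorem runWeight_le_lvfaeLang (M : LVFAe Q A l) {n : ℕ} (τ : Fin n → Option A)
    (path : Fin (n + 1) → Q) : M.runWeight τ path ≤ lvfaeLang M (List.ofFn τ).reduceOption :=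
  le_iSup_of_le n <| le_iSup_of_le τ <| le_iSup_of_le rfl <| le_iSup (M.runWeight τ) path

theorem lvfaeLang_le_of_runWeight_le {M : LVFAe Q A l} {N : LVFAe P A l}
    (h : ∀ (n : ℕ) (τ : Fin n → Option A) (path : Fin (n + 1) → Q),
      M.runWeight τ path ≤ lvfaeLang N (List.ofFn τ).reduceOption) (w : List A) :
    lvfaeLang M w ≤ lvfaeLang N w :=
  iSup_le fun n => iSup_le fun τ => iSup_le fun hw => iSup_le fun path => hw ▸ h n τ path

theorem lvfaeLang_relabel (M : LVFAe Q A l) (e : Q ≃ P) (w : List A) :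
    lvfaeLang (M.relabel e) w = lvfaeLang M w := by
  refine le_antisymm (lvfaeLang_le_of_runWeight_le (fun _ τ path => ?_) w)
    (lvfaeLang_le_of_runWeight_le (fun _ τ path => ?_) w)
  · exact M.runWeight_le_lvfaeLang τ (e.symm ∘ path)
  · simpa [runWeight_relabel, Function.comp_def] using
      (M.relabel e).runWeight_le_lvfaeLang τ (e ∘ path)

end Lang

abbrev Guess (Q A : Type*) := Q × Set (Q × Option A × Q)

def transitions {n : ℕ} (τ : Fin n → Option A) (path : Fin (n + 1) → Q) :
    Set (Q × Option A × Q) :=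
  Set.range fun i => (path i.castSucc, τ i, path i.succ)

def GuessStep : Option (Guess Q A × Q) → Option A → Option (Guess Q A × Q) → Prop
  | none, σ, some (g, q) => σ = none ∧ q = g.1
  | some (g, q), σ, some (g', q') => g' = g ∧ (q, σ, q') ∈ g.2
  | _, _, none => False

theorem exists_run_of_guessStep {n : ℕ} {τ : Fin (n + 1) → Option A}
    {path : Fin (n + 2) → Option (Guess Q A × Q)} (h0 : path 0 = none)
    (hstep : ∀ i, GuessStep (path i.castSucc) (τ i) (path i.succ)) :
    τ 0 = none ∧ ∃ (g : Guess Q A) (p : Fin (n + 1) → Q), p 0 = g.1 ∧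
      transitions (Fin.tail τ) p ⊆ g.2 ∧ path (Fin.last (n + 1)) = some (g, p (Fin.last n)) := by
  obtain ⟨hτ0, g, h1⟩ : τ 0 = none ∧ ∃ g : Guess Q A, path (Fin.succ 0) = some (g, g.1) := by
    have h := hstep 0
    rw [Fin.castSucc_zero, h0] at h
    rcases hs : path (Fin.succ 0) with _ | ⟨g, q⟩
    · rw [hs] at h
      exact h.elim
    · rw [hs] at h
      exact ⟨h.1, g, by rw [h.2]⟩
  have hg (k : Fin (n + 1)) : ∃ q, path k.succ = some (g, q) := by
    induction k using Fin.induction with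
    | zero => exact ⟨g.1, h1⟩
    | succ k ih =>
      obtain ⟨q, hq⟩ := ih
      have h := hstep k.succ
      rw [← Fin.succ_castSucc, hq] at h
      rcases hs : path k.succ.succ with _ | ⟨g', q'⟩
      · rw [hs] at h
        exact h.elim
      · rw [hs] at h
        exact ⟨q', by rw [h.1]⟩
  choose p hp using hg
  refine ⟨hτ0, g, p, ?_, ?_, by rw [← Fin.succ_last, hp]⟩
  · have h := (hp 0).symm.trans h1
    simp only [Option.some.injEq, Prod.mk.injEq] at h
    exact h.2
  · rintro _ ⟨i, rfl⟩
    have h := hstep i.succ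
    rw [← Fin.succ_castSucc, hp, hp] at h
    exact h.2

section Crisp

variable [CompleteLattice l] (M : LVFAe Q A l)

def guessWeight (g : Guess Q A) : l :=
  M.init g.1 ⊓ ⨅ t ∈ g.2, M.δ t.1 t.2.1 t.2.2

theorem guessWeight_le_of_subset {q : Q} {S T : Set (Q × Option A × Q)} (h : S ⊆ T) :
    M.guessWeight (q, T) ≤ M.guessWeight (q, S) :=
  inf_le_inf_left _ (iInf_le_iInf_of_subset h)

theorem guessWeight_transitions {n : ℕ} (τ : Fin n → Option A) (path : Fin (n + 1) → Q) :
    M.guessWeight (path 0, transitions τ path) ⊓ M.final (path (Fin.last n)) =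
      M.runWeight τ path := by
  simp only [guessWeight, transitions, iInf_range, runWeight]

open Classical in
noncomputable def crisp : LVFAe (Option (Guess Q A × Q)) A l where
  δ s σ s' := if GuessStep s σ s' then ⊤ else ⊥
  init s := if s = none then ⊤ else ⊥
  final
    | none => ⊥
    | some (g, q) => M.guessWeight g ⊓ M.final q

theorem crisp_δ_eq_bot_or_eq_top (s : Option (Guess Q A × Q)) (σ : Option A)
    (s' : Option (Guess Q A × Q)) : M.crisp.δ s σ s' = ⊥ ∨ M.crisp.δ s σ s' = ⊤ := by
  by_cases h : GuessStep s σ s' <;> simp [crisp, h]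

theorem runWeight_crisp_cons {n : ℕ} (τ : Fin n → Option A) (path : Fin (n + 1) → Q) :
    M.crisp.runWeight (Fin.cons none τ)
      (Fin.cons none fun k => some ((path 0, transitions τ path), path k)) =
      M.runWeight τ path := by
  set path' : Fin (n + 2) → Option (Guess Q A × Q) :=
    Fin.cons none fun k => some ((path 0, transitions τ path), path k)
  have hinit : M.crisp.init (path' 0) = ⊤ := by simp [crisp, path']
  have hstep (i : Fin (n + 1)) :
      M.crisp.δ (path' i.castSucc) ((Fin.cons none τ : Fin (n + 1) → Option A) i)
        (path' i.succ) = ⊤ := by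
    refine if_pos ?_
    induction i using Fin.cases with
    | zero => exact ⟨rfl, rfl⟩
    | succ j =>
      rw [← Fin.succ_castSucc]
      exact ⟨rfl, Set.mem_range_self j⟩
  simp only [runWeight, hinit, hstep, iInf_top, inf_top_eq, top_inf_eq, ← Fin.succ_last]
  exact M.guessWeight_transitions τ path

theorem runWeight_crisp_eq_bot {n : ℕ} {τ : Fin n → Option A}
    {path : Fin (n + 1) → Option (Guess Q A × Q)}
    (h : ¬(path 0 = none ∧ ∀ i, GuessStep (path i.castSucc) (τ i) (path i.succ))) :
    M.crisp.runWeight τ path = ⊥ := by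
  rw [not_and_or, not_forall] at h
  refine eq_bot_iff.2 ?_
  rcases h with hinit | ⟨i, hi⟩
  · exact (M.crisp.runWeight_le_init τ path).trans (if_neg hinit).le
  · exact (M.crisp.runWeight_le_δ τ path i).trans (if_neg hi).le

end Crisp

section CrispLang

variable [OrthomodularCompleteLattice l] (M : LVFAe Q A l)

theorem lvfaeLang_le_lvfaeLang_crisp (w : List A) : lvfaeLang M w ≤ lvfaeLang M.crisp w := by
  refine lvfaeLang_le_of_runWeight_le (fun n τ path => ?_) w
  rw [← M.runWeight_crisp_cons τ path, ← List.reduceOption_cons_of_none, ← List.ofFn_cons]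
  exact M.crisp.runWeight_le_lvfaeLang _ _

theorem lvfaeLang_crisp_le_lvfaeLang (w : List A) : lvfaeLang M.crisp w ≤ lvfaeLang M w := by
  refine lvfaeLang_le_of_runWeight_le (fun N τ path => ?_) w
  by_cases hrun : path 0 = none ∧ ∀ i, GuessStep (path i.castSucc) (τ i) (path i.succ)
  swap
  · exact (M.runWeight_crisp_eq_bot hrun).trans_le bot_le
  cases N with
  | zero =>
    exact (M.crisp.runWeight_le_final τ path).trans (by rw [Fin.last_zero, hrun.1]; exact bot_le)
  | succ n =>
    obtain ⟨hτ0, g, p, hp0, hsub, hlast⟩ := exists_run_of_guessStep hrun.1 hrun.2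
    calc M.crisp.runWeight τ path
        ≤ M.crisp.final (path (Fin.last (n + 1))) := M.crisp.runWeight_le_final τ path
      _ = M.guessWeight (p 0, g.2) ⊓ M.final (p (Fin.last n)) := by rw [hlast, hp0]; rfl
      _ ≤ M.guessWeight (p 0, transitions (Fin.tail τ) p) ⊓ M.final (p (Fin.last n)) :=
        inf_le_inf_right _ (M.guessWeight_le_of_subset hsub)
      _ = M.runWeight (Fin.tail τ) p := M.guessWeight_transitions _ p
      _ ≤ lvfaeLang M (List.ofFn (Fin.tail τ)).reduceOption := M.runWeight_le_lvfaeLang _ p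
      _ = lvfaeLang M (List.ofFn τ).reduceOption := by
        rw [List.ofFn_succ (f := τ), hτ0, List.reduceOption_cons_of_none]
        rfl

theorem lvfaeLang_crisp (w : List A) : lvfaeLang M.crisp w = lvfaeLang M w :=
  le_antisymm (M.lvfaeLang_crisp_le_lvfaeLang w) (M.lvfaeLang_le_lvfaeLang_crisp w)

end CrispLang

end LVFAe

/-- Every `l`-VFA with ε-moves is equivalent to one with crisp transitions and a unique
initial state. -/
theorem lvfae_to_crisp {l Q A : Type*} [OrthomodularCompleteLattice l]
    [Fintype Q] [Fintype A] (M : LVFAe Q A l) :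
    ∃ (P : Type) (_ : Fintype P) (B : LVFAe P A l),
      (∀ p a q, B.δ p a q = ⊥ ∨ B.δ p a q = ⊤) ∧
      (∃ p₀ : P, B.init p₀ = ⊤ ∧ ∀ p, p ≠ p₀ → B.init p = ⊥) ∧
      ∀ w : List A, lvfaeLang M w = lvfaeLang B w := by
  -- `P` must live in `Type`, so the states of `M.crisp` are renamed into a `Fin`.
  let e := Fintype.equivFin (Option (LVFAe.Guess Q A × Q))
  refine ⟨_, inferInstance, M.crisp.relabel e, fun p a q => M.crisp_δ_eq_bot_or_eq_top _ a _,
    ⟨e none, ?_, fun p hp => ?_⟩, fun w => ?_⟩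
  · simp [LVFAe.relabel, LVFAe.crisp]
  · simp [LVFAe.relabel, LVFAe.crisp, e.symm_apply_eq, hp]
  · rw [LVFAe.lvfaeLang_relabel, LVFAe.lvfaeLang_crisp]
end

section
/- Pumping lemma in quantum logic: for every l-regular language A : Σ* → l there exists a positive integer n such that for every string z ∈ Σ* with |z| ≥ n there exist u, v, w ∈ Σ* with z = uvw, |uv| ≤ n, v ≠ ε, and for every non-negative integer k, A(u v^k w) = A(u v w). -/
/-!
Meets need not distribute over joins in an orthomodular lattice, so the usual matrix argument
for weighted automata is unavailable. What survives is that `⊓` is idempotent, commutative and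
associative: the value of a run depends only on its endpoints and on the *set* of transitions it
uses. Hence the recognized language at `x` is determined by the finite datum
`runTransitionSets x : Q → Q → Finset (Finset (Q × A × Q))`, which is compatible with appending
on the right. As for a right congruence of finite index, pigeonhole on the prefixes of `z` yields
the pumping decomposition.
-/

section Pumping

variable {A β γ : Type*}

theorem List.exists_split_map_eq_of_card_le [Fintype β] (g : List A → β) {z : List A}
    (hz : Fintype.card β ≤ z.length) :
    ∃ u v w, z = u ++ v ++ w ∧ (u ++ v).length ≤ Fintype.card β ∧ v ≠ [] ∧ g u = g (u ++ v) := by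
  obtain ⟨i, j, hne, heq⟩ := Fintype.exists_ne_map_eq_of_card_lt
    (fun i : Fin (Fintype.card β + 1) => g (z.take i)) (by simp)
  wlog hij : i < j generalizing i j
  · exact this j i hne.symm heq.symm (hne.lt_or_gt.resolve_left hij)
  rw [Fin.lt_def] at hij
  have hj : (j : ℕ) ≤ z.length := (Nat.lt_succ_iff.mp j.isLt).trans hz
  have hsplit : z.take i ++ (z.take j).drop i = z.take j := by
    rw [(by rw [List.take_take, min_eq_left hij.le] : z.take i = (z.take j).take i),
      List.take_append_drop]
  refine ⟨z.take i, (z.take j).drop i, z.drop j, ?_, ?_, ?_, ?_⟩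
  · rw [hsplit, List.take_append_drop]
  · rw [hsplit, List.length_take]
    exact (min_le_left _ _).trans (Nat.lt_succ_iff.mp j.isLt)
  · rw [← List.length_pos_iff, List.length_drop, List.length_take, min_eq_left hj]
    omega
  · rw [hsplit]
    exact heq

theorem append_flatten_replicate_map_eq {g : List A → β}
    (hg : ∀ x x' y, g x = g x' → g (x ++ y) = g (x' ++ y)) {u v : List A}
    (h : g (u ++ v) = g u) : ∀ k, g (u ++ (List.replicate k v).flatten) = g u
  | 0 => by simp
  | k + 1 => by
    rw [List.replicate_succ, List.flatten_cons, ← List.append_assoc, hg _ _ _ h,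
      append_flatten_replicate_map_eq hg h k]

theorem exists_pumping_of_factorsThrough [Fintype β] (g : List A → β)
    (hg : ∀ x x' y, g x = g x' → g (x ++ y) = g (x' ++ y)) (f : List A → γ)
    (hf : ∀ x y, g x = g y → f x = f y) :
    ∃ n : ℕ, 0 < n ∧ ∀ z : List A, n ≤ z.length →
      ∃ u v w : List A, z = u ++ v ++ w ∧ (u ++ v).length ≤ n ∧ v ≠ [] ∧
        ∀ k : ℕ, f (u ++ (List.replicate k v).flatten ++ w) = f (u ++ v ++ w) := by
  refine ⟨Fintype.card β, Fintype.card_pos_iff.mpr ⟨g []⟩, fun z hz => ?_⟩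
  obtain ⟨u, v, w, rfl, hlen, hv, heq⟩ := List.exists_split_map_eq_of_card_le g hz
  refine ⟨u, v, w, rfl, hlen, hv, fun k => hf _ _ ?_⟩
  rw [hg _ _ w (append_flatten_replicate_map_eq hg heq.symm k), hg _ _ w heq]

end Pumping

theorem iInf_fin_succ {α : Type*} [CompleteLattice α] {n : ℕ} (f : Fin (n + 1) → α) :
    ⨅ i, f i = f 0 ⊓ ⨅ i : Fin n, f i.succ := by
  refine le_antisymm (le_inf (iInf_le f 0) (le_iInf fun i => iInf_le f i.succ))
    (le_iInf fun i => ?_)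
  induction i using Fin.cases with
  | zero => exact inf_le_left
  | succ j => exact inf_le_right.trans (iInf_le _ j)

section RunTransitionSets

variable {Q A : Type*} [Fintype Q] [DecidableEq Q] [DecidableEq A]

def runTransitionSets : List A → Q → Q → Finset (Finset (Q × A × Q))
  | [], p, q => if p = q then {∅} else ∅
  | a :: x, p, r => Finset.univ.biUnion fun q => (runTransitionSets x q r).image (insert (p, a, q))

theorem mem_runTransitionSets_nil {p q : Q} {S : Finset (Q × A × Q)} :
    S ∈ runTransitionSets [] p q ↔ p = q ∧ S = ∅ := by
  unfold runTransitionSets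
  split_ifs <;> simp_all

theorem mem_runTransitionSets_cons {a : A} {x : List A} {p r : Q} {S : Finset (Q × A × Q)} :
    S ∈ runTransitionSets (a :: x) p r ↔
      ∃ q, ∃ S' ∈ runTransitionSets x q r, S = insert (p, a, q) S' := by
  simp [runTransitionSets, eq_comm]

theorem mem_runTransitionSets_append {x y : List A} {p r : Q} {S : Finset (Q × A × Q)} :
    S ∈ runTransitionSets (x ++ y) p r ↔
      ∃ q, ∃ S₁ ∈ runTransitionSets x p q, ∃ S₂ ∈ runTransitionSets y q r, S = S₁ ∪ S₂ := by
  induction x generalizing p S with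
  | nil => simp [mem_runTransitionSets_nil]
  | cons a x ih =>
    simp only [List.cons_append, mem_runTransitionSets_cons, ih]
    constructor
    · rintro ⟨q', S', ⟨q, S₁, h₁, S₂, h₂, rfl⟩, rfl⟩
      exact ⟨q, _, ⟨q', S₁, h₁, rfl⟩, S₂, h₂, (Finset.insert_union _ _ _).symm⟩
    · rintro ⟨q, _, ⟨q', S₁, h₁, rfl⟩, S₂, h₂, rfl⟩
      exact ⟨q', S₁ ∪ S₂, ⟨q, S₁, h₁, S₂, h₂, rfl⟩, Finset.insert_union _ _ _⟩

theorem runTransitionSets_append_congr {x x' : List A}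
    (h : (runTransitionSets x : Q → Q → _) = runTransitionSets x') (y : List A) :
    (runTransitionSets (x ++ y) : Q → Q → _) = runTransitionSets (x' ++ y) := by
  funext p r
  ext S
  rw [mem_runTransitionSets_append, mem_runTransitionSets_append, h]

end RunTransitionSets

namespace LVFA

variable {Q A l : Type*} [CompleteLattice l]

def transitionsInf (M : LVFA Q A l) (S : Finset (Q × A × Q)) : l :=
  S.inf fun t => M.δ t.1 t.2.1 t.2.2

-- `lvfaLang M` is definitionally `M.langWith M.init M.final`; the initial weight is freed so that
-- `langWith_cons` can absorb the first transition into it.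
def langWith (M : LVFA Q A l) (i f : Q → l) (x : List A) : l :=
  ⨆ path : Fin (x.length + 1) → Q,
    i (path 0) ⊓
      (⨅ j : Fin x.length, M.δ (path j.castSucc) (x.get j) (path j.succ)) ⊓
      f (path (Fin.last x.length))

theorem langWith_nil (M : LVFA Q A l) (i f : Q → l) :
    M.langWith i f [] = ⨆ q, i q ⊓ f q := by
  refine le_antisymm (iSup_le fun path => le_iSup_of_le (path 0) ?_)
    (iSup_le fun q => le_iSup_of_le (fun _ => q) ?_) <;> simp [Fin.last]

theorem langWith_cons (M : LVFA Q A l) (i f : Q → l) (a : A) (x : List A) :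
    M.langWith i f (a :: x) = ⨆ p, M.langWith (fun q => i p ⊓ M.δ p a q) f x := by
  unfold langWith
  rw [← (Fin.consEquiv fun _ => Q).iSup_comp, iSup_prod]
  refine iSup_congr fun p => iSup_congr fun path => ?_
  -- `(a :: x).length` is `x.length + 1` only up to unfolding, hence `erw` and the closing `rfl`
  erw [iInf_fin_succ]
  simp only [Fin.consEquiv_apply, Fin.cons_zero, Fin.castSucc_zero, ← Fin.succ_castSucc,
    Fin.cons_succ, List.get_cons_zero, inf_assoc]
  rfl

variable [Fintype Q] [DecidableEq Q] [DecidableEq A]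

theorem langWith_eq_iSup_runTransitionSets (M : LVFA Q A l) (i f : Q → l) (x : List A) :
    M.langWith i f x =
      ⨆ (p) (q), (runTransitionSets x p q).sup fun S => i p ⊓ M.transitionsInf S ⊓ f q := by
  induction x generalizing i with
  | nil =>
    rw [langWith_nil]
    refine le_antisymm (iSup_le fun q => le_iSup₂_of_le q q ?_) (iSup₂_le fun p q => ?_)
    · refine le_trans ?_ (Finset.le_sup (mem_runTransitionSets_nil.mpr ⟨rfl, rfl⟩))
      simp [transitionsInf]
    · refine Finset.sup_le fun S hS => ?_
      obtain ⟨rfl, rfl⟩ := mem_runTransitionSets_nil.mp hS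
      exact le_iSup_of_le p (by simp [transitionsInf])
  | cons a x ih =>
    simp only [langWith_cons, ih, runTransitionSets, Finset.sup_biUnion, Finset.sup_image,
      Finset.sup_univ_eq_iSup]
    refine iSup_congr fun p => ?_
    rw [iSup_comm]
    refine iSup_congr fun q' => iSup_congr fun q => Finset.sup_congr rfl fun S _ => ?_
    simp only [Function.comp_apply, transitionsInf, Finset.inf_insert, inf_assoc]

theorem langWith_congr (M : LVFA Q A l) (i f : Q → l) {x y : List A}
    (h : (runTransitionSets x : Q → Q → _) = runTransitionSets y) :
    M.langWith i f x = M.langWith i f y := by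
  rw [langWith_eq_iSup_runTransitionSets, langWith_eq_iSup_runTransitionSets, h]

end LVFA

/-- Pumping lemma in quantum logic. -/
theorem lregular_pumping {l A : Type*} [OrthomodularCompleteLattice l] [Fintype A]
    (f : List A → l) (hf : IsLRegular f) :
    ∃ n : ℕ, 0 < n ∧ ∀ z : List A, n ≤ z.length →
      ∃ u v w : List A, z = u ++ v ++ w ∧ (u ++ v).length ≤ n ∧ v ≠ [] ∧
        ∀ k : ℕ, f (u ++ (List.replicate k v).flatten ++ w) = f (u ++ v ++ w) := by
  classical
  obtain ⟨Q, _, M, hM⟩ := hf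
  obtain rfl : lvfaLang M = f := funext hM
  exact exists_pumping_of_factorsThrough (fun x => (runTransitionSets x : Q → Q → _))
    (fun _ _ y h => runTransitionSets_append_congr h y) _
    (fun _ _ h => M.langWith_congr M.init M.final h)
end

section
/- An l-valued language A : Σ* → l is l-regular if and only if the image set Im(A) is finite, for every r ∈ Im(A)∖{0} the level set A_[r] = { ω ∈ Σ* : A(ω) = r } is a (classical) regular language, and A = ⋁_{r ∈ Im(A)∖{0}} r·1_{A_[r]}. -/
/-!
A run of an `l`-VFA is summarised by its first state, the set of transitions it uses and its last
state, and since `⊓` is idempotent and commutative its weight depends only on this summary. There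
are finitely many summaries, and the set of summaries of the runs over `w` is computed by a DFA
reading `w`, so `lvfaLang M w` is a function of the state of a finite deterministic automaton; this
gives a finite image and regular level sets. Conversely, running the DFAs of the nonzero level sets
in parallel and outputting the join of the levels whose DFA accepts recognizes `f`.
-/

namespace LVDFA

variable {Q Q' A l : Type*}

open Classical in
noncomputable def toLVFA [CompleteLattice l] (M : LVDFA Q A l) : LVFA Q A l where
  δ q a q' := if q' = M.next q a then ⊤ else ⊥
  init q := if q = M.start then ⊤ else ⊥
  final := M.final

theorem lvfaLang_toLVFA [OrthomodularCompleteLattice l] (M : LVDFA Q A l) :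
    lvfaLang M.toLVFA = lvdfaLang M := by
  ext w
  set run : Fin (w.length + 1) → Q := fun k => (w.take k).foldl M.next M.start
  have run_succ (i : Fin w.length) : run i.succ = M.next (run i.castSucc) (w.get i) := by
    simp only [run, Fin.val_succ, Fin.val_castSucc, List.take_add_one,
      List.getElem?_eq_getElem i.isLt, Option.toList_some, List.foldl_append, List.foldl_cons,
      List.foldl_nil, List.get_eq_getElem]
  have run_zero : run 0 = M.start := rfl
  have run_last : run (Fin.last w.length) = w.foldl M.next M.start := by simp [run]
  apply le_antisymm
  · refine iSup_le fun p => ?_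
    by_cases h0 : p 0 = M.start
    · by_cases hstep : ∀ i : Fin w.length, p i.succ = M.next (p i.castSucc) (w.get i)
      · have hp : p = run := funext fun k => by
          induction k using Fin.induction with
          | zero => rw [h0, run_zero]
          | succ i ih => rw [hstep, run_succ, ih]
        subst hp
        exact inf_le_right.trans (le_of_eq (congrArg M.final run_last))
      · obtain ⟨i, hi⟩ := not_forall.mp hstep
        refine (inf_le_left.trans (inf_le_right.trans (iInf_le _ i))).trans ?_
        simp only [toLVFA, if_neg hi]
        exact bot_le
    · refine (inf_le_left.trans inf_le_left).trans ?_
      simp [toLVFA, h0]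
  · refine le_iSup_of_le run (le_of_eq ?_)
    simp [toLVFA, run_zero, run_succ, run_last, lvdfaLang]

def reindex (e : Q ≃ Q') (M : LVDFA Q A l) : LVDFA Q' A l where
  next q a := e (M.next (e.symm q) a)
  start := e M.start
  final q := M.final (e.symm q)

theorem foldl_reindex (e : Q ≃ Q') (M : LVDFA Q A l) (w : List A) (q : Q) :
    w.foldl (M.reindex e).next (e q) = e (w.foldl M.next q) := by
  induction w generalizing q with
  | nil => rfl
  | cons a w ih =>
    have hstep : (M.reindex e).next (e q) a = e (M.next q a) := by simp [reindex]
    rw [List.foldl_cons, hstep, ih, List.foldl_cons]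

theorem lvdfaLang_reindex (e : Q ≃ Q') (M : LVDFA Q A l) :
    lvdfaLang (M.reindex e) = lvdfaLang M := by
  ext w
  change M.final (e.symm (w.foldl (M.reindex e).next (e M.start))) = _
  rw [foldl_reindex, e.symm_apply_apply, lvdfaLang]

theorem isLRegular_lvdfaLang [OrthomodularCompleteLattice l] [Finite Q] (M : LVDFA Q A l) :
    IsLRegular (lvdfaLang M) := by
  obtain ⟨n, ⟨e⟩⟩ := Finite.exists_equiv_fin Q
  exact ⟨Fin n, inferInstance, (M.reindex e).toLVFA, by simp [lvfaLang_toLVFA, lvdfaLang_reindex]⟩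

theorem finite_range_lvdfaLang [Finite Q] (M : LVDFA Q A l) : (Set.range (lvdfaLang M)).Finite :=
  (Set.finite_range M.final).subset (Set.range_subset_iff.mpr fun _ => ⟨_, rfl⟩)

theorem isRegular_lvdfaLang_eq [Finite Q] (M : LVDFA Q A l) (r : l) :
    Language.IsRegular {w | lvdfaLang M w = r} :=
  Language.isRegular_iff.mpr ⟨Q, Fintype.ofFinite Q, ⟨M.next, M.start, {q | M.final q = r}⟩, rfl⟩

def pi [CompleteLattice l] {ι : Type*} {σ : ι → Type*} (D : ∀ i, DFA A (σ i)) (k : ι → l) :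
    LVDFA (∀ i, σ i) A l where
  next s a i := (D i).step (s i) a
  start i := (D i).start
  final s := ⨆ i, ⨆ _ : s i ∈ (D i).accept, k i

theorem foldl_pi_apply [CompleteLattice l] {ι : Type*} {σ : ι → Type*} (D : ∀ i, DFA A (σ i))
    (k : ι → l) (w : List A) (s : ∀ i, σ i) (i : ι) :
    w.foldl (pi D k).next s i = (D i).evalFrom (s i) w := by
  induction w generalizing s with
  | nil => rfl
  | cons a w ih => exact ih _

theorem lvdfaLang_pi [CompleteLattice l] {ι : Type*} {σ : ι → Type*} (D : ∀ i, DFA A (σ i))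
    (k : ι → l) (w : List A) : lvdfaLang (pi D k) w = ⨆ i, ⨆ _ : w ∈ (D i).accepts, k i := by
  change (⨆ i, ⨆ _ : w.foldl (pi D k).next (pi D k).start i ∈ (D i).accept, k i) = _
  simp only [foldl_pi_apply]
  rfl

end LVDFA

section Determinization

variable {Q A l : Type*}

def pathTraces (Q : Type*) (w : List A) : Set (Q × Set (Q × A × Q) × Q) :=
  Set.range fun p : Fin (w.length + 1) → Q =>
    (p 0, Set.range (fun i : Fin w.length => (p i.castSucc, w.get i, p i.succ)),
      p (Fin.last w.length))

def consTraces (a : A) (T : Set (Q × Set (Q × A × Q) × Q)) : Set (Q × Set (Q × A × Q) × Q) :=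
  {t | ∃ q, ∃ u ∈ T, t = (q, insert (q, a, u.1) u.2.1, u.2.2)}

def snocTraces (a : A) (T : Set (Q × Set (Q × A × Q) × Q)) : Set (Q × Set (Q × A × Q) × Q) :=
  {t | ∃ q, ∃ u ∈ T, t = (u.1, insert (u.2.2, a, q) u.2.1, q)}

theorem pathTraces_nil : pathTraces Q ([] : List A) = Set.range fun q => (q, ∅, q) := by
  ext t
  constructor
  · rintro ⟨p, rfl⟩
    exact ⟨p 0, by simp [Set.range_eq_empty]⟩
  · rintro ⟨q, rfl⟩
    exact ⟨fun _ => q, by simp [Set.range_eq_empty]⟩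

theorem pathTraces_cons (a : A) (w : List A) :
    pathTraces Q (a :: w) = consTraces a (pathTraces Q w) := by
  ext t
  constructor
  · rintro ⟨p, rfl⟩
    refine ⟨p 0, _, ⟨Fin.tail p, rfl⟩, ?_⟩
    dsimp only
    rw [Fin.range_fin_succ]
    rfl
  · rintro ⟨q, _, ⟨p, rfl⟩, rfl⟩
    refine ⟨Fin.cons q p, ?_⟩
    dsimp only
    rw [Fin.range_fin_succ]
    rfl

theorem consTraces_snocTraces (a b : A) (T : Set (Q × Set (Q × A × Q) × Q)) :
    consTraces b (snocTraces a T) = snocTraces a (consTraces b T) := by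
  ext t
  simp only [consTraces, snocTraces, Set.mem_ofPred_eq]
  constructor
  · rintro ⟨q, _, ⟨q', u, hu, rfl⟩, rfl⟩
    exact ⟨q', _, ⟨q, u, hu, rfl⟩, by simp [Set.insert_comm]⟩
  · rintro ⟨q', _, ⟨q, u, hu, rfl⟩, rfl⟩
    exact ⟨q, _, ⟨q', u, hu, rfl⟩, by simp [Set.insert_comm]⟩

theorem pathTraces_append_singleton (w : List A) (a : A) :
    pathTraces Q (w ++ [a]) = snocTraces a (pathTraces Q w) := by
  induction w with
  | nil =>
    rw [List.nil_append, pathTraces_cons, pathTraces_nil]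
    ext t
    simpa [consTraces, snocTraces] using exists_comm
  | cons b w ih => rw [List.cons_append, pathTraces_cons, ih, pathTraces_cons, consTraces_snocTraces]

def LVFA.traceWeight [CompleteLattice l] (M : LVFA Q A l) (t : Q × Set (Q × A × Q) × Q) : l :=
  M.init t.1 ⊓ (⨅ e ∈ t.2.1, M.δ e.1 e.2.1 e.2.2) ⊓ M.final t.2.2

theorem lvfaLang_eq_iSup_traceWeight [OrthomodularCompleteLattice l] (M : LVFA Q A l)
    (w : List A) : lvfaLang M w = ⨆ t ∈ pathTraces Q w, M.traceWeight t := by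
  simp only [lvfaLang, pathTraces, iSup_range, LVFA.traceWeight, iInf_range]

def LVFA.determinize [CompleteLattice l] (M : LVFA Q A l) :
    LVDFA (Set (Q × Set (Q × A × Q) × Q)) A l where
  next T a := snocTraces a T
  start := pathTraces Q []
  final T := ⨆ t ∈ T, M.traceWeight t

theorem LVFA.foldl_determinize [CompleteLattice l] (M : LVFA Q A l) (w : List A) :
    w.foldl M.determinize.next M.determinize.start = pathTraces Q w := by
  induction w using List.reverseRecOn with
  | nil => rfl
  | append_singleton w a ih =>
    rw [List.foldl_append, ih, pathTraces_append_singleton]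
    rfl

theorem LVFA.lvdfaLang_determinize [OrthomodularCompleteLattice l] (M : LVFA Q A l) :
    lvdfaLang M.determinize = lvfaLang M := by
  ext w
  rw [lvdfaLang, foldl_determinize, lvfaLang_eq_iSup_traceWeight]
  rfl

end Determinization

theorem iSup_levels {α L : Type*} [CompleteLattice L] (f : α → L) (x : α) :
    (⨆ r ∈ Set.range f, ⨆ _ : r ≠ ⊥, ⨆ _ : f x = r, r) = f x := by
  refine le_antisymm (iSup₂_le fun _ _ => iSup₂_le fun _ hr => hr.ge) ?_
  by_cases h : f x = ⊥
  · exact h.le.trans bot_le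
  · exact le_iSup₂_of_le (f x) ⟨x, rfl⟩ (le_iSup₂_of_le h rfl le_rfl)

theorem isLRegular_of_levels {A l : Type*} [OrthomodularCompleteLattice l] {f : List A → l}
    (hfin : (Set.range f).Finite)
    (hreg : ∀ r ∈ Set.range f, r ≠ ⊥ → Language.IsRegular {w | f w = r}) : IsLRegular f := by
  let R := {r // r ∈ Set.range f ∧ r ≠ ⊥}
  have : Finite R := (hfin.subset fun _ hr => hr.1).to_subtype
  choose σ _ D hD using fun r : R => hreg r.1 r.2.1 r.2.2
  have hf : lvdfaLang (LVDFA.pi D Subtype.val) = f := by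
    ext w
    rw [LVDFA.lvdfaLang_pi]
    simp only [hD]
    refine le_antisymm (iSup₂_le fun _ hr => hr.ge) ?_
    by_cases h : f w = ⊥
    · exact h.le.trans bot_le
    · exact le_iSup₂_of_le ⟨f w, ⟨w, rfl⟩, h⟩ rfl le_rfl
  exact hf ▸ LVDFA.isLRegular_lvdfaLang _

/-- Level-set characterization of `l`-regular languages. -/
theorem lregular_iff_levels {l A : Type*} [OrthomodularCompleteLattice l] [Fintype A]
    (f : List A → l) :
    IsLRegular f ↔
      (Set.range f).Finite ∧
      (∀ r ∈ Set.range f, r ≠ ⊥ → Language.IsRegular {w : List A | f w = r}) ∧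
      ∀ w : List A, f w = ⨆ r ∈ Set.range f, ⨆ _ : r ≠ ⊥, ⨆ _ : f w = r, r := by
  refine ⟨fun ⟨Q, _, M, hM⟩ => ?_, fun ⟨hfin, hreg, _⟩ => isLRegular_of_levels hfin hreg⟩
  obtain rfl : lvdfaLang M.determinize = f := M.lvdfaLang_determinize.trans (funext hM)
  exact ⟨LVDFA.finite_range_lvdfaLang _, fun r _ _ => LVDFA.isRegular_lvdfaLang_eq _ r,
    fun w => (iSup_levels _ w).symm⟩
end

section
/- If A and B are l-regular languages over Σ, then their union A ∨ B, defined by (A ∨ B)(ω) = A(ω) ∨ B(ω), is an l-regular language. -/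
/-!
The disjoint union of automata for `f` and `g` recognizes `f ⊔ g`. Its transitions between the
two components have weight `⊥`, so a run that switches component contributes `⊥`; every other
run is a run of one of the two automata, with the same weight.
-/

theorem Fin.exists_comp_inl_or_comp_inr {α β : Type*} {n : ℕ} (p : Fin (n + 1) → α ⊕ β)
    (h : ∀ i : Fin n, (p i.castSucc).isLeft = (p i.succ).isLeft) :
    (∃ p₁, p = Sum.inl ∘ p₁) ∨ ∃ p₂, p = Sum.inr ∘ p₂ := by
  have hconst : ∀ k, (p k).isLeft = (p 0).isLeft := by
    intro k
    induction k using Fin.induction with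
    | zero => rfl
    | succ i ih => rw [← h i, ih]
  cases h0 : (p 0).isLeft
  · right
    choose p₂ hp₂ using fun k => Sum.isRight_iff.1 (by simpa [h0] using hconst k)
    exact ⟨p₂, funext hp₂⟩
  · left
    choose p₁ hp₁ using fun k => Sum.isLeft_iff.1 ((hconst k).trans h0)
    exact ⟨p₁, funext hp₁⟩

namespace LVFA

variable {Q Q₁ Q₂ A l : Type*}

def pathWeight [CompleteLattice l] (M : LVFA Q A l) (w : List A)
    (path : Fin (w.length + 1) → Q) : l :=
  M.init (path 0) ⊓ (⨅ i : Fin w.length, M.δ (path i.castSucc) (w.get i) (path i.succ)) ⊓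
    M.final (path (Fin.last w.length))

theorem lvfaLang_eq_iSup_pathWeight [OrthomodularCompleteLattice l] (M : LVFA Q A l)
    (w : List A) : lvfaLang M w = ⨆ path, M.pathWeight w path :=
  rfl

def sum [Bot l] (M₁ : LVFA Q₁ A l) (M₂ : LVFA Q₂ A l) : LVFA (Q₁ ⊕ Q₂) A l where
  δ
    | .inl q, a, .inl q' => M₁.δ q a q'
    | .inr q, a, .inr q' => M₂.δ q a q'
    | _, _, _ => ⊥
  init := Sum.elim M₁.init M₂.init
  final := Sum.elim M₁.final M₂.final

section sum

variable [CompleteLattice l] (M₁ : LVFA Q₁ A l) (M₂ : LVFA Q₂ A l) (w : List A)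

@[simp]
theorem pathWeight_sum_comp_inl (path : Fin (w.length + 1) → Q₁) :
    (M₁.sum M₂).pathWeight w (Sum.inl ∘ path) = M₁.pathWeight w path :=
  rfl

@[simp]
theorem pathWeight_sum_comp_inr (path : Fin (w.length + 1) → Q₂) :
    (M₁.sum M₂).pathWeight w (Sum.inr ∘ path) = M₂.pathWeight w path :=
  rfl

theorem pathWeight_sum_eq_bot_of_isLeft_ne {path : Fin (w.length + 1) → Q₁ ⊕ Q₂}
    {i : Fin w.length} (hi : (path i.castSucc).isLeft ≠ (path i.succ).isLeft) :
    (M₁.sum M₂).pathWeight w path = ⊥ := by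
  have hstep : (M₁.sum M₂).δ (path i.castSucc) (w.get i) (path i.succ) = ⊥ := by
    revert hi
    rcases path i.castSucc with q | q <;> rcases path i.succ with q' | q' <;> simp [sum]
  refine eq_bot_iff.2 ?_
  calc (M₁.sum M₂).pathWeight w path
      ≤ (M₁.sum M₂).δ (path i.castSucc) (w.get i) (path i.succ) :=
        inf_le_left.trans <| inf_le_right.trans <| iInf_le _ i
    _ = ⊥ := hstep

end sum

theorem lvfaLang_sum [OrthomodularCompleteLattice l] (M₁ : LVFA Q₁ A l) (M₂ : LVFA Q₂ A l)
    (w : List A) : lvfaLang (M₁.sum M₂) w = lvfaLang M₁ w ⊔ lvfaLang M₂ w := by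
  simp only [lvfaLang_eq_iSup_pathWeight]
  refine le_antisymm (iSup_le fun path => ?_) (sup_le ?_ ?_)
  · by_cases hcross : ∃ i, (path (Fin.castSucc i)).isLeft ≠ (path i.succ).isLeft
    · obtain ⟨i, hi⟩ := hcross
      exact (pathWeight_sum_eq_bot_of_isLeft_ne M₁ M₂ w hi).trans_le bot_le
    · push Not at hcross
      rcases Fin.exists_comp_inl_or_comp_inr path hcross with ⟨p₁, rfl⟩ | ⟨p₂, rfl⟩
      · exact le_sup_of_le_left <| le_iSup_of_le p₁ (pathWeight_sum_comp_inl M₁ M₂ w p₁).le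
      · exact le_sup_of_le_right <| le_iSup_of_le p₂ (pathWeight_sum_comp_inr M₁ M₂ w p₂).le
  · exact iSup_le fun p₁ => le_iSup_of_le (Sum.inl ∘ p₁) (pathWeight_sum_comp_inl M₁ M₂ w p₁).ge
  · exact iSup_le fun p₂ => le_iSup_of_le (Sum.inr ∘ p₂) (pathWeight_sum_comp_inr M₁ M₂ w p₂).ge

end LVFA

theorem lregular_union_general {l A : Type*} [OrthomodularCompleteLattice l]
    (f g : List A → l) (hf : IsLRegular f) (hg : IsLRegular g) :
    IsLRegular (fun w => f w ⊔ g w) := by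
  obtain ⟨Q₁, _, M₁, hM₁⟩ := hf
  obtain ⟨Q₂, _, M₂, hM₂⟩ := hg
  exact ⟨Q₁ ⊕ Q₂, inferInstance, M₁.sum M₂, fun w => by rw [LVFA.lvfaLang_sum, hM₁, hM₂]⟩

/-- `l`-regular languages are closed under union. -/
theorem lregular_union {l A : Type*} [OrthomodularCompleteLattice l] [Fintype A]
    (f g : List A → l) (hf : IsLRegular f) (hg : IsLRegular g) :
    IsLRegular (fun w => f w ⊔ g w) :=
  lregular_union_general f g hf hg
end

section
/- If A is an l-regular language over Σ and r ∈ l, then the scalar product rA, defined by (rA)(ω) = r ∧ A(ω), is an l-regular language. -/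
/-!
Meets do not distribute over joins in an orthomodular lattice, so `r` cannot simply be pushed onto
the initial weights of an automaton for `f`. Instead, note that the weight of a path depends only on
its summary: first state, set of transitions used, last state. The set of summaries of the paths
over `w` is computed letter by letter by a finite deterministic automaton (a subset construction),
and `r ⊓ f w = r ⊓ ⨆ x ∈ S, weight x` is a function of its final state `S`. Finally, every output
function of a finite deterministic automaton is `l`-regular: with crisp `⊥`/`⊤` transitions, only
the run of the automaton contributes to the join defining `lvfaLang`.
-/

section Deterministic

variable {l : Type*} [OrthomodularCompleteLattice l]

def LVFA.ofDet {S A : Type*} (next : S → A → S) (start : S) (out : S → l) : LVFA S A l where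
  δ s a s' := ⨆ _ : s' = next s a, ⊤
  init s := ⨆ _ : s = start, ⊤
  final := out

variable {S A : Type*} (next : S → A → S) (start : S)

def runPath (w : List A) (i : Fin (w.length + 1)) : S := (w.take i).foldl next start

theorem runPath_zero (w : List A) : runPath next start w 0 = start := by
  simp [runPath]

theorem runPath_succ (w : List A) (i : Fin w.length) :
    runPath next start w i.succ = next (runPath next start w i.castSucc) (w.get i) := by
  rw [runPath, runPath, Fin.val_succ, Fin.val_castSucc, List.take_add_one,
    List.getElem?_eq_getElem i.isLt, Option.toList_some, List.foldl_append, List.foldl_cons,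
    List.foldl_nil, List.get_eq_getElem]

theorem runPath_last (w : List A) :
    runPath next start w (Fin.last w.length) = w.foldl next start := by
  simp [runPath]

theorem eq_runPath {w : List A} {p : Fin (w.length + 1) → S} (h0 : p 0 = start)
    (hs : ∀ i : Fin w.length, p i.succ = next (p i.castSucc) (w.get i)) :
    p = runPath next start w := by
  funext i
  induction i using Fin.induction with
  | zero => rw [h0, runPath_zero]
  | succ j ih => rw [hs j, ih, runPath_succ]

theorem lvfaLang_ofDet (out : S → l) (w : List A) :
    lvfaLang (LVFA.ofDet next start out) w = out (w.foldl next start) := by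
  apply le_antisymm
  · refine iSup_le fun p => ?_
    by_cases h0 : p 0 = start
    · by_cases hs : ∀ i : Fin w.length, p i.succ = next (p i.castSucc) (w.get i)
      · rw [eq_runPath next start h0 hs, runPath_last]
        exact inf_le_right
      · obtain ⟨i, hi⟩ := not_forall.mp hs
        refine inf_le_left.trans (inf_le_right.trans ((iInf_le _ i).trans ?_))
        exact (iSup_neg (α := l) hi).trans_le bot_le
    · exact inf_le_left.trans (inf_le_left.trans ((iSup_neg (α := l) h0).trans_le bot_le))
  · refine le_trans ?_ (le_iSup _ (runPath next start w))
    simp [LVFA.ofDet, runPath_zero, runPath_succ, runPath_last]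

theorem IsLRegular.of_foldl {S : Type} [Finite S] (next : S → A → S) (start : S) (out : S → l) :
    IsLRegular (fun w => out (w.foldl next start)) :=
  ⟨S, Fintype.ofFinite S, LVFA.ofDet next start out, lvfaLang_ofDet next start out⟩

end Deterministic

section Summaries

variable {l : Type*} [OrthomodularCompleteLattice l] {Q A C : Type*} (e : A → C)

def pathTransitions (w : List A) (p : Fin (w.length + 1) → Q) : Set (Q × C × Q) :=
  Set.range fun i : Fin w.length => (p i.castSucc, e (w.get i), p i.succ)

def pathSummary (w : List A) (p : Fin (w.length + 1) → Q) : Q × Set (Q × C × Q) × Q :=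
  (p 0, pathTransitions e w p, p (Fin.last w.length))

def extendSummaries (S : Set (Q × Set (Q × C × Q) × Q)) (a : A) :
    Set (Q × Set (Q × C × Q) × Q) :=
  {y | ∃ x ∈ S, ∃ q : Q, y = (x.1, insert (x.2.2, e a, q) x.2.1, q)}

def trivialSummaries : Set (Q × Set (Q × C × Q) × Q) :=
  Set.range fun q => (q, ∅, q)

theorem pathTransitions_nil (p : Fin 1 → Q) : pathTransitions e [] p = ∅ := by
  simp [pathTransitions]

theorem pathTransitions_cons (a : A) (u : List A) (p : Fin (u.length + 2) → Q) :
    pathTransitions e (a :: u) p = insert (p 0, e a, p 1) (pathTransitions e u (Fin.tail p)) := by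
  simp only [pathTransitions]
  rw [← Fin.range_cons]
  congr 1
  funext i
  refine Fin.cases rfl (fun j => ?_) i
  simp only [Fin.cons_succ, Fin.tail, ← Fin.succ_castSucc]
  rfl

theorem foldl_extendSummaries (S : Set (Q × Set (Q × C × Q) × Q)) (w : List A) :
    w.foldl (extendSummaries e) S = {x | ∃ y ∈ S, ∃ p : Fin (w.length + 1) → Q,
      p 0 = y.2.2 ∧ x = (y.1, y.2.1 ∪ pathTransitions e w p, p (Fin.last w.length))} := by
  induction w generalizing S with
  | nil =>
    ext x
    simp only [List.foldl_nil, pathTransitions_nil, Set.union_empty, Set.mem_ofPred_eq]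
    constructor
    · intro hx
      exact ⟨x, hx, fun _ => x.2.2, rfl, rfl⟩
    · rintro ⟨y, hy, p, hp, rfl⟩
      simpa [Fin.last_zero, hp] using hy
  | cons a u ih =>
    ext x
    simp only [List.foldl_cons, ih, extendSummaries, Set.mem_ofPred_eq]
    constructor
    · rintro ⟨-, ⟨y, hy, q, rfl⟩, p, hp, rfl⟩
      refine ⟨y, hy, Fin.cons y.2.2 p, rfl, ?_⟩
      simp [pathTransitions_cons, hp, Set.insert_union, Set.union_insert]
    · rintro ⟨y, hy, p, hp, rfl⟩
      refine ⟨_, ⟨y, hy, p 1, rfl⟩, Fin.tail p, rfl, ?_⟩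
      simp [pathTransitions_cons, hp, Set.insert_union, Set.union_insert, Fin.tail, ← Fin.succ_last]

theorem foldl_extendSummaries_trivialSummaries (w : List A) :
    w.foldl (extendSummaries e) trivialSummaries = Set.range (pathSummary e w (Q := Q)) := by
  ext x
  simp [foldl_extendSummaries, trivialSummaries, pathSummary, eq_comm]

variable (M : LVFA Q A l)

def summaryValue (d : C → A) (x : Q × Set (Q × C × Q) × Q) : l :=
  M.init x.1 ⊓ (⨅ t ∈ x.2.1, M.δ t.1 (d t.2.1) t.2.2) ⊓ M.final x.2.2

theorem summaryValue_pathSummary {d : C → A} (hde : Function.LeftInverse d e) (w : List A)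
    (p : Fin (w.length + 1) → Q) :
    summaryValue M d (pathSummary e w p) = M.init (p 0) ⊓
      (⨅ i : Fin w.length, M.δ (p i.castSucc) (w.get i) (p i.succ)) ⊓
      M.final (p (Fin.last w.length)) := by
  rw [summaryValue, pathSummary, pathTransitions, iInf_range]
  simp only [hde _]

theorem lvfaLang_eq_iSup_summaryValue {d : C → A} (hde : Function.LeftInverse d e) (w : List A) :
    lvfaLang M w = ⨆ x ∈ w.foldl (extendSummaries e) trivialSummaries, summaryValue M d x := by
  rw [foldl_extendSummaries_trivialSummaries, iSup_range]
  simp only [summaryValue_pathSummary e M hde, lvfaLang]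

end Summaries

/-- `l`-regular languages are closed under scalar product. -/
theorem lregular_scalar {l A : Type*} [OrthomodularCompleteLattice l] [Fintype A]
    (f : List A → l) (r : l) (hf : IsLRegular f) :
    IsLRegular (fun w => r ⊓ f w) := by
  obtain ⟨Q, _, M, hM⟩ := hf
  -- letters are recorded in `Fin (card A)` so that the summary automaton's states form a `Type`
  let e := Fintype.equivFin A
  have hfold : ∀ w, f w = ⨆ x ∈ w.foldl (extendSummaries e) trivialSummaries,
      summaryValue M e.symm x := fun w =>
    (hM w).symm.trans (lvfaLang_eq_iSup_summaryValue e M e.symm_apply_apply w)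
  simp only [hfold]
  exact IsLRegular.of_foldl _ _ fun S => r ⊓ ⨆ x ∈ S, summaryValue M e.symm x
end
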